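/- arXiv:2010.00580 — 3 statements merged into one kernel-verified Lean document; each statement's English description precedes it below -/
import Mathlib

section
/- For every real κ with 1 < κ < 4, the five vectors v_x, v_1, v_2, v_{-1}, v_{-2} of the standard pyramidal disk packing satisfy: ⟨v,v⟩ = 1 for each of them; ⟨v_x, v_i⟩ = −1 for every i ∈ {1, 2, −1, −2}; ⟨v_1, v_2⟩ = ⟨v_2, v_{-1}⟩ = ⟨v_{-1}, v_{-2}⟩ = ⟨v_{-2}, v_1⟩ = −1; and ⟨v_1, v_{-1}⟩ < −1 and ⟨v_2, v_{-2}⟩ < −1. (Thus they realize a disk packing whose tangency graph is the square-pyramid graph ⊠.) -/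
noncomputable section

/-- The Lorentzian product on ℝ⁴: ⟨u,v⟩ = u₁v₁ + u₂v₂ + u₃v₃ − u₄v₄. -/
def lprod (u v : Fin 4 → ℝ) : ℝ := u 0 * v 0 + u 1 * v 1 + u 2 * v 2 - u 3 * v 3

/-- Inversive coordinates of the disks of the standard pyramidal disk packing. -/
def vx : Fin 4 → ℝ := ![0, -1, 1, 1]
def v1 (κ : ℝ) : Fin 4 → ℝ := ![0, 1 - κ, -1, κ - 1]
def v2 (κ : ℝ) : Fin 4 → ℝ := ![2 / Real.sqrt κ, 0, 2 / κ - 1, 2 / κ]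
def vm1 : Fin 4 → ℝ := ![0, 1, 1, 1]
def vm2 (κ : ℝ) : Fin 4 → ℝ := ![-(2 / Real.sqrt κ), 0, 2 / κ - 1, 2 / κ]

/-! Every product is a rational function of κ once `√κ ^ 2 = κ` is used. The two non-adjacent
pairs have products `1 - 2κ` and `1 - 8/κ`, which are `< -1` exactly for `κ > 1` and `κ < 4`. -/

theorem lprod_vecCons (a₀ a₁ a₂ a₃ b₀ b₁ b₂ b₃ : ℝ) :
    lprod ![a₀, a₁, a₂, a₃] ![b₀, b₁, b₂, b₃] = a₀ * b₀ + a₁ * b₁ + a₂ * b₂ - a₃ * b₃ :=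
  rfl

theorem two_div_sqrt_mul_self {κ : ℝ} (hκ : 0 ≤ κ) : 2 / √κ * (2 / √κ) = 4 / κ := by
  rw [div_mul_div_comm, Real.mul_self_sqrt hκ]
  norm_num

theorem lprod_vx_vx : lprod vx vx = 1 := by
  rw [vx, lprod_vecCons]; ring

theorem lprod_vm1_vm1 : lprod vm1 vm1 = 1 := by
  rw [vm1, lprod_vecCons]; ring

theorem lprod_v1_v1 (κ : ℝ) : lprod (v1 κ) (v1 κ) = 1 := by
  rw [v1, lprod_vecCons]; ring

theorem lprod_v2_v2 {κ : ℝ} (hκ : 0 ≤ κ) : lprod (v2 κ) (v2 κ) = 1 := by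
  rw [v2, lprod_vecCons, two_div_sqrt_mul_self hκ]; ring

theorem lprod_vm2_vm2 {κ : ℝ} (hκ : 0 ≤ κ) : lprod (vm2 κ) (vm2 κ) = 1 := by
  rw [vm2, lprod_vecCons, neg_mul_neg, two_div_sqrt_mul_self hκ]; ring

theorem lprod_vx_v1 (κ : ℝ) : lprod vx (v1 κ) = -1 := by
  rw [vx, v1, lprod_vecCons]; ring

theorem lprod_vx_v2 (κ : ℝ) : lprod vx (v2 κ) = -1 := by
  rw [vx, v2, lprod_vecCons]; ring

theorem lprod_vx_vm1 : lprod vx vm1 = -1 := by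
  rw [vx, vm1, lprod_vecCons]; ring

theorem lprod_vx_vm2 (κ : ℝ) : lprod vx (vm2 κ) = -1 := by
  rw [vx, vm2, lprod_vecCons]; ring

theorem lprod_v1_v2 {κ : ℝ} (hκ : κ ≠ 0) : lprod (v1 κ) (v2 κ) = -1 := by
  rw [v1, v2, lprod_vecCons]; field_simp; ring

theorem lprod_v2_vm1 (κ : ℝ) : lprod (v2 κ) vm1 = -1 := by
  rw [v2, vm1, lprod_vecCons]; ring

theorem lprod_vm1_vm2 (κ : ℝ) : lprod vm1 (vm2 κ) = -1 := by
  rw [vm1, vm2, lprod_vecCons]; ring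

theorem lprod_vm2_v1 {κ : ℝ} (hκ : κ ≠ 0) : lprod (vm2 κ) (v1 κ) = -1 := by
  rw [vm2, v1, lprod_vecCons]; field_simp; ring

theorem lprod_v1_vm1 (κ : ℝ) : lprod (v1 κ) vm1 = 1 - 2 * κ := by
  rw [v1, vm1, lprod_vecCons]; ring

theorem lprod_v2_vm2 {κ : ℝ} (hκ : 0 ≤ κ) : lprod (v2 κ) (vm2 κ) = 1 - 8 / κ := by
  rw [v2, vm2, lprod_vecCons, mul_neg, two_div_sqrt_mul_self hκ]; ring

/-- For every `1 < κ < 4`, the five vectors of the standard pyramidal disk packing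
are normalized, the tangent pairs have product `−1`, and the two remaining pairs have
product `< −1`; hence they realize a disk packing with tangency graph `⊠`. -/
theorem pyramidal_disk_packing_realizes_square_pyramid
    (κ : ℝ) (hκ1 : 1 < κ) (hκ4 : κ < 4) :
    lprod vx vx = 1 ∧ lprod (v1 κ) (v1 κ) = 1 ∧ lprod (v2 κ) (v2 κ) = 1 ∧
    lprod vm1 vm1 = 1 ∧ lprod (vm2 κ) (vm2 κ) = 1 ∧
    lprod vx (v1 κ) = -1 ∧ lprod vx (v2 κ) = -1 ∧
    lprod vx vm1 = -1 ∧ lprod vx (vm2 κ) = -1 ∧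
    lprod (v1 κ) (v2 κ) = -1 ∧ lprod (v2 κ) vm1 = -1 ∧
    lprod vm1 (vm2 κ) = -1 ∧ lprod (vm2 κ) (v1 κ) = -1 ∧
    lprod (v1 κ) vm1 < -1 ∧ lprod (v2 κ) (vm2 κ) < -1 := by
  have hκ : 0 < κ := by linarith
  have h_v1_vm1 : lprod (v1 κ) vm1 < -1 := by
    rw [lprod_v1_vm1]; linarith
  have h_v2_vm2 : lprod (v2 κ) (vm2 κ) < -1 := by
    have : 2 < 8 / κ := by rw [lt_div_iff₀ hκ]; linarith
    rw [lprod_v2_vm2 hκ.le]; linarith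
  exact ⟨lprod_vx_vx, lprod_v1_v1 κ, lprod_v2_v2 hκ.le, lprod_vm1_vm1, lprod_vm2_vm2 hκ.le,
    lprod_vx_v1 κ, lprod_vx_v2 κ, lprod_vx_vm1, lprod_vx_vm2 κ, lprod_v1_v2 hκ.ne',
    lprod_v2_vm1 κ, lprod_vm1_vm2 κ, lprod_vm2_v1 hκ.ne', h_v1_vm1, h_v2_vm2⟩
end
end

section
/- For every real κ with 1 < κ < 4, there is a unique vector v ∈ ℝ⁴ with ⟨v,v⟩ = 1, ⟨v, v_1⟩ = 0, ⟨v, v_{-1}⟩ = 0, ⟨v, v_x⟩ = 0 and ⟨v, v_2⟩ > 1, namely the mirror-disk vector v_2* = (1, 0, 0, 0); moreover ⟨v_2*, v_2⟩ = 2/√κ, which is strictly greater than 1. -/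
noncomputable section

/-- The mirror disk `d₂*`. -/
def v2star : Fin 4 → ℝ := ![1, 0, 0, 0]

/-! Orthogonality to `v₋₁` and `v_x` kills the second coordinate and forces the last two to
agree; orthogonality to `v₁` then kills those too (`κ ≠ 0`). So `v` is a multiple `a • v₂*`, the
normalization gives `a = ±1`, and `⟨v, v₂⟩ = a · 2/√κ > 1` selects `a = 1`. -/

lemma lprod_smul_left (a : ℝ) (u w : Fin 4 → ℝ) : lprod (a • u) w = a * lprod u w := by
  simp only [lprod, Pi.smul_apply, smul_eq_mul]
  ring

lemma lprod_v2star_left (w : Fin 4 → ℝ) : lprod v2star w = w 0 := by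
  simp [lprod, v2star]

lemma orthogonal_v1_vm1_vx_iff {κ : ℝ} (hκ : κ ≠ 0) (v : Fin 4 → ℝ) :
    (lprod v (v1 κ) = 0 ∧ lprod v vm1 = 0 ∧ lprod v vx = 0) ↔ v = v 0 • v2star := by
  constructor
  · rintro ⟨h1, hm1, hx⟩
    simp only [lprod, v1, vm1, vx, Matrix.cons_val] at h1 hm1 hx
    have hv1 : v 1 = 0 := by linarith
    have hv23 : v 2 = v 3 := by linarith
    have hv3 : v 3 = 0 := by
      have : κ * v 3 = 0 := by rw [hv1, hv23] at h1; linarith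
      exact (mul_eq_zero.1 this).resolve_left hκ
    funext i
    fin_cases i <;> simp [v2star, hv1, hv23, hv3]
  · intro hv
    rw [hv]
    simp [lprod_smul_left, lprod_v2star_left, v1, vm1, vx]

lemma one_lt_two_div_sqrt {κ : ℝ} (hκ0 : 0 < κ) (hκ4 : κ < 4) : 1 < 2 / √κ := by
  have hsqrt : √κ < 2 := (Real.sqrt_lt' two_pos).2 (by norm_num [hκ4])
  exact (one_lt_div (Real.sqrt_pos.2 hκ0)).2 hsqrt

/-- For `1 < κ < 4`, the unique normalized vector orthogonal to `v₁`, `v₋₁`, `v_x`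
and with product `> 1` with `v₂` is the mirror-disk vector `v₂* = (1,0,0,0)`;
moreover `⟨v₂*, v₂⟩ = 2/√κ > 1`. -/
theorem mirror_disk_two_unique (κ : ℝ) (hκ1 : 1 < κ) (hκ4 : κ < 4) :
    (∀ v : Fin 4 → ℝ,
      (lprod v v = 1 ∧ lprod v (v1 κ) = 0 ∧ lprod v vm1 = 0 ∧ lprod v vx = 0 ∧
        1 < lprod v (v2 κ)) ↔ v = v2star) ∧
    lprod v2star (v2 κ) = 2 / Real.sqrt κ ∧
    1 < 2 / Real.sqrt κ := by
  have hκ0 : 0 < κ := by linarith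
  have hgt : 1 < 2 / √κ := one_lt_two_div_sqrt hκ0 hκ4
  have hstar : lprod v2star (v2 κ) = 2 / √κ := by simp [lprod_v2star_left, v2]
  refine ⟨fun v => ⟨?_, ?_⟩, hstar, hgt⟩
  · rintro ⟨hnorm, h1, hm1, hx, h2⟩
    obtain ⟨a, rfl⟩ : ∃ a, v = a • v2star :=
      ⟨_, (orthogonal_v1_vm1_vx_iff hκ0.ne' v).1 ⟨h1, hm1, hx⟩⟩
    rw [lprod_smul_left, hstar] at h2
    rw [lprod_smul_left, lprod_v2star_left] at hnorm
    have ha : a * a = 1 := by simpa [v2star] using hnorm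
    rcases mul_self_eq_one_iff.1 ha with rfl | rfl
    · exact one_smul ℝ v2star
    · linarith
  · rintro rfl
    have hnorm : lprod v2star v2star = 1 := by
      rw [lprod_v2star_left]
      simp [v2star]
    obtain ⟨h1, hm1, hx⟩ := (orthogonal_v1_vm1_vx_iff hκ0.ne' v2star).2 (by simp [v2star])
    exact ⟨hnorm, h1, hm1, hx, hstar ▸ hgt⟩
end
end

section
/- For every real κ with 1 < κ < 4, the Lorentzian reflection σ₁(u) = u − 2⟨u, v_1*⟩ v_1* in the mirror vector v_1* satisfies σ₁(v_1) = v_{-1}, σ₁(v_{-1}) = v_1, σ₁(v_2) = v_2, σ₁(v_{-2}) = v_{-2}, σ₁(v_x) = v_x and σ₁(v_t) = v_t; and the Lorentzian reflection σ₂(u) = u − 2⟨u, v_2*⟩ v_2* in the mirror vector v_2* satisfies σ₂(v_2) = v_{-2}, σ₂(v_{-2}) = v_2, σ₂(v_1) = v_1, σ₂(v_{-1}) = v_{-1}, σ₂(v_x) = v_x and σ₂(v_t) = v_t. -/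
noncomputable section

/-- The mirror disks `d₁*`, `d₂*` and the tangency disk `d_t`. -/
def v1star (κ : ℝ) : Fin 4 → ℝ :=
  ![0, -(Real.sqrt κ / 2), -(1 / Real.sqrt κ), (κ - 2) / (2 * Real.sqrt κ)]
def vt (κ : ℝ) : Fin 4 → ℝ :=
  ![0, -(2 / Real.sqrt (κ ^ 2 + 4)), κ / Real.sqrt (κ ^ 2 + 4), 0]

/-- Lorentzian reflection in (the hyperplane orthogonal to) the vector `m`. -/
def lreflect (m u : Fin 4 → ℝ) : Fin 4 → ℝ := u - (2 * lprod u m) • m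


/-!
A Lorentzian reflection in a unit vector `m` fixes every vector orthogonal to `m` and is an
involution, so each swap `u ↦ w` needs to be computed in one direction only. Everything then
reduces to evaluating a handful of Lorentzian products; those against `v₁*` become polynomial
identities after writing `κ = s²` with `s = √κ > 0`.
-/

lemma lprod_sub_smul_left (u w m : Fin 4 → ℝ) (a : ℝ) :
    lprod (u - a • w) m = lprod u m - a * lprod w m := by
  simp only [lprod, Pi.sub_apply, Pi.smul_apply, smul_eq_mul]
  ring

lemma lreflect_of_lprod_eq_zero {m u : Fin 4 → ℝ} (h : lprod u m = 0) : lreflect m u = u := by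
  simp [lreflect, h]

lemma lreflect_lreflect {m : Fin 4 → ℝ} (hm : lprod m m = 1) (u : Fin 4 → ℝ) :
    lreflect m (lreflect m u) = u := by
  rw [lreflect, lreflect, lprod_sub_smul_left, hm]
  module

lemma lreflect_eq_symm {m u w : Fin 4 → ℝ} (hm : lprod m m = 1) (h : lreflect m u = w) :
    lreflect m w = u := by
  rw [← h, lreflect_lreflect hm]

lemma exists_pos_sq_eq {κ : ℝ} (hκ : 0 < κ) : ∃ s : ℝ, 0 < s ∧ s ^ 2 = κ :=
  ⟨√κ, Real.sqrt_pos.2 hκ, Real.sq_sqrt hκ.le⟩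

section v1star

variable {κ : ℝ} (hκ : 0 < κ)
include hκ

lemma lprod_v1star_self : lprod (v1star κ) (v1star κ) = 1 := by
  obtain ⟨s, hs, rfl⟩ := exists_pos_sq_eq hκ
  simp [lprod, v1star, Real.sqrt_sq hs.le]
  field_simp
  ring

lemma lprod_v1_v1star : lprod (v1 κ) (v1star κ) = √κ := by
  obtain ⟨s, hs, rfl⟩ := exists_pos_sq_eq hκ
  simp [lprod, v1star, v1, Real.sqrt_sq hs.le]
  field_simp
  ring

lemma lprod_v2_v1star : lprod (v2 κ) (v1star κ) = 0 := by
  obtain ⟨s, hs, rfl⟩ := exists_pos_sq_eq hκ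
  simp [lprod, v1star, v2, Real.sqrt_sq hs.le]
  field_simp
  ring

lemma lprod_vm2_v1star : lprod (vm2 κ) (v1star κ) = 0 := by
  obtain ⟨s, hs, rfl⟩ := exists_pos_sq_eq hκ
  simp [lprod, v1star, vm2, Real.sqrt_sq hs.le]
  field_simp
  ring

lemma lprod_vx_v1star : lprod vx (v1star κ) = 0 := by
  obtain ⟨s, hs, rfl⟩ := exists_pos_sq_eq hκ
  simp [lprod, v1star, vx, Real.sqrt_sq hs.le]
  field_simp
  ring

lemma lprod_vt_v1star : lprod (vt κ) (v1star κ) = 0 := by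
  obtain ⟨s, hs, rfl⟩ := exists_pos_sq_eq hκ
  simp [lprod, v1star, vt, Real.sqrt_sq hs.le]
  field_simp
  ring

lemma lreflect_v1star_v1 : lreflect (v1star κ) (v1 κ) = vm1 := by
  rw [lreflect, lprod_v1_v1star hκ]
  obtain ⟨s, hs, rfl⟩ := exists_pos_sq_eq hκ
  ext i
  fin_cases i <;> simp [v1, v1star, vm1, Real.sqrt_sq hs.le] <;> field_simp <;> ring

end v1star

lemma lprod_v2star (u : Fin 4 → ℝ) : lprod u v2star = u 0 := by
  simp [lprod, v2star]

lemma lprod_v2star_self : lprod v2star v2star = 1 := by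
  simp [lprod, v2star]

lemma lreflect_v2star_v2 (κ : ℝ) : lreflect v2star (v2 κ) = vm2 κ := by
  rw [lreflect, lprod_v2star]
  ext i
  fin_cases i <;> simp [v2, v2star, vm2]
  ring

theorem mirror_reflections_act_general (κ : ℝ) (hκ1 : 1 < κ) :
    lreflect (v1star κ) (v1 κ) = vm1 ∧
    lreflect (v1star κ) vm1 = v1 κ ∧
    lreflect (v1star κ) (v2 κ) = v2 κ ∧
    lreflect (v1star κ) (vm2 κ) = vm2 κ ∧
    lreflect (v1star κ) vx = vx ∧
    lreflect (v1star κ) (vt κ) = vt κ ∧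
    lreflect v2star (v2 κ) = vm2 κ ∧
    lreflect v2star (vm2 κ) = v2 κ ∧
    lreflect v2star (v1 κ) = v1 κ ∧
    lreflect v2star vm1 = vm1 ∧
    lreflect v2star vx = vx ∧
    lreflect v2star (vt κ) = vt κ := by
  have hκ : 0 < κ := by linarith
  have hσ₁ := lreflect_v1star_v1 hκ
  have hσ₂ := lreflect_v2star_v2 κ
  refine ⟨hσ₁, lreflect_eq_symm (lprod_v1star_self hκ) hσ₁,
    lreflect_of_lprod_eq_zero (lprod_v2_v1star hκ),
    lreflect_of_lprod_eq_zero (lprod_vm2_v1star hκ),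
    lreflect_of_lprod_eq_zero (lprod_vx_v1star hκ),
    lreflect_of_lprod_eq_zero (lprod_vt_v1star hκ),
    hσ₂, lreflect_eq_symm lprod_v2star_self hσ₂, ?_, ?_, ?_, ?_⟩ <;>
  exact lreflect_of_lprod_eq_zero (by simp [lprod_v2star, v1, vm1, vx, vt])

/-- For `1 < κ < 4`, the Lorentzian reflection in `v₁*` swaps `v₁ ↔ v₋₁` and fixes
`v₂`, `v₋₂`, `v_x`, `v_t`; the Lorentzian reflection in `v₂*` swaps `v₂ ↔ v₋₂`
and fixes `v₁`, `v₋₁`, `v_x`, `v_t`. -/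
theorem mirror_reflections_act (κ : ℝ) (hκ1 : 1 < κ) (hκ4 : κ < 4) :
    lreflect (v1star κ) (v1 κ) = vm1 ∧
    lreflect (v1star κ) vm1 = v1 κ ∧
    lreflect (v1star κ) (v2 κ) = v2 κ ∧
    lreflect (v1star κ) (vm2 κ) = vm2 κ ∧
    lreflect (v1star κ) vx = vx ∧
    lreflect (v1star κ) (vt κ) = vt κ ∧
    lreflect v2star (v2 κ) = vm2 κ ∧
    lreflect v2star (vm2 κ) = v2 κ ∧
    lreflect v2star (v1 κ) = v1 κ ∧
    lreflect v2star vm1 = vm1 ∧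
    lreflect v2star vx = vx ∧
    lreflect v2star (vt κ) = vt κ :=
  mirror_reflections_act_general κ hκ1
end
end
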